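/- Assume λ_k < α ≤ β. Then the map M_{α,β} is globally Lipschitz continuous from (V₂, ‖·‖_{L²}) into (V₁, ‖·‖): there exists a constant C > 0 such that ‖M_{α,β}(v₂) − M_{α,β}(v₁)‖ ≤ C ‖v₂ − v₁‖_{L²} for all v₁, v₂ ∈ V₂. -/

import Mathlib

/-! On each fibre `v + V₁` the functional `J = J_{α,β}` is strongly concave: along a midpoint
step by `w ∈ V₁` the quadratic part loses `‖w‖²/4` while `u ↦ α‖u⁺‖² + β‖u⁻‖²` is
`α`-strongly convex and gains at least `α‖Tw‖²/4 ≥ (α/λ_k)‖w‖²/4`. Hence leaving the maximiser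
`M v + v` by `w ∈ V₁` costs at least `(α - λ_k)/(4λ_k) ‖w‖²`. Doing this at `v₁` and at `v₂`
with `w = M v₂ - M v₁` and adding, the quadratic parts cancel since `V₁ ⟂ V₂`, and what remains
is a mixed second difference of `u ↦ α‖u⁺‖² + β‖u⁻‖²`, at most `2β‖Tw‖‖T(v₂ - v₁)‖` because the
derivative of `t ↦ α(t⁺)² + β(t⁻)²` is `2β`-Lipschitz. Finally `‖Tw‖ ≤ c‖w‖` on the
finite-dimensional `V₁`. -/
open MeasureTheory RealInnerProductSpace Filter Topology

/-- The functional `J_{α,β}(u) = ½(B(u,u) - α∫_Ω (u⁺)² - β∫_Ω (u⁻)²)`, where the Hilbert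
space `X₀` carries the Gagliardo-type inner product `B = ⟪·,·⟫` and `T : X₀ → L²(Ω)` is the
embedding into `L²(Ω)`; note `∫_Ω (u⁺)² = ‖(Tu)⁺‖²_{L²}`. -/
noncomputable def Jfun {Ω : Type*} [MeasurableSpace Ω] {μ : Measure Ω}
    {X₀ : Type*} [NormedAddCommGroup X₀] [InnerProductSpace ℝ X₀]
    (T : X₀ →ₗ[ℝ] Lp ℝ 2 μ) (α β : ℝ) (u : X₀) : ℝ :=
  (⟪u, u⟫ - α * ‖Lp.posPart (T u)‖ ^ 2 - β * ‖Lp.negPart (T u)‖ ^ 2) / 2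

noncomputable def asymSq (a b t : ℝ) : ℝ := a * max t 0 ^ 2 + b * max (-t) 0 ^ 2

lemma asymSq_eq (a b t : ℝ) : asymSq a b t = a * t ^ 2 + (b - a) * min t 0 ^ 2 := by
  rcases le_total t 0 with h | h
  · rw [asymSq, max_eq_right h, max_eq_left (by linarith), min_eq_left h]; ring
  · rw [asymSq, max_eq_left h, max_eq_right (by linarith), min_eq_right h]; ring

lemma sq_min_zero_midpoint (x h : ℝ) :
    2 * min (x + 2⁻¹ * h) 0 ^ 2 ≤ min x 0 ^ 2 + min (x + h) 0 ^ 2 := by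
  have hle : min (x + 2⁻¹ * h) 0 ≤ 0 := min_le_right _ _
  have hge : (min x 0 + min (x + h) 0) / 2 ≤ min (x + 2⁻¹ * h) 0 :=
    le_min (by linarith [min_le_left x 0, min_le_left (x + h) 0])
      (by linarith [min_le_right x 0, min_le_right (x + h) 0])
  nlinarith [sq_nonneg (min x 0 - min (x + h) 0)]

lemma sq_min_zero_mixed_le (t w d : ℝ) :
    min (t + w) 0 ^ 2 + min (t + d) 0 ^ 2 - min t 0 ^ 2 - min (t + w + d) 0 ^ 2
      ≤ 2 * (|w| * |d|) := by
  rcases le_total w 0 with hw | hw <;> rcases le_total d 0 with hd | hd <;>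
  simp only [abs_of_nonpos, abs_of_nonneg, hw, hd] <;>
  rcases le_total t 0 with h1 | h1 <;> rcases le_total (t + w) 0 with h2 | h2 <;>
  rcases le_total (t + d) 0 with h3 | h3 <;> rcases le_total (t + w + d) 0 with h4 | h4 <;>
  simp only [min_eq_left, min_eq_right, h1, h2, h3, h4] <;> nlinarith

lemma asymSq_midpoint {a b : ℝ} (hab : a ≤ b) (x h : ℝ) :
    a / 2 * h ^ 2 ≤ asymSq a b x + asymSq a b (x + h) - 2 * asymSq a b (x + 2⁻¹ * h) := by
  simp only [asymSq_eq]
  nlinarith [mul_le_mul_of_nonneg_left (sq_min_zero_midpoint x h) (sub_nonneg.2 hab)]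

lemma asymSq_mixed_le {a b : ℝ} (ha : 0 ≤ a) (hab : a ≤ b) (t w d : ℝ) :
    asymSq a b (t + w) + asymSq a b (t + d) - asymSq a b t - asymSq a b (t + w + d)
      ≤ 2 * b * (|w| * |d|) := by
  have hwd : -(w * d) ≤ |w| * |d| := by rw [← abs_mul]; exact neg_le_abs _
  simp only [asymSq_eq]
  nlinarith [mul_le_mul_of_nonneg_left (sq_min_zero_mixed_le t w d) (sub_nonneg.2 hab),
    mul_le_mul_of_nonneg_left hwd ha]

namespace MeasureTheory.Lp

variable {Ω : Type*} [MeasurableSpace Ω] {μ : Measure Ω}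

lemma norm_sq_eq_integral (f : Lp ℝ 2 μ) : ‖f‖ ^ 2 = ∫ x, f x ^ 2 ∂μ := by
  rw [← real_inner_self_eq_norm_sq, L2.inner_def]
  simp only [RCLike.inner_apply, conj_trivial, sq]

lemma inner_abs_abs_ae_eq (f g : Lp ℝ 2 μ) :
    (fun x => ⟪(|f| : Lp ℝ 2 μ) x, (|g| : Lp ℝ 2 μ) x⟫) =ᵐ[μ] fun x => |f x| * |g x| := by
  filter_upwards [Lp.coeFn_abs f, Lp.coeFn_abs g] with x hf hg
  simp [hf, hg, mul_comm]

lemma integrable_abs_mul_abs (f g : Lp ℝ 2 μ) : Integrable (fun x => |f x| * |g x|) μ :=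
  (L2.integrable_inner |f| |g|).congr (inner_abs_abs_ae_eq f g)

lemma integral_abs_mul_abs_le (f g : Lp ℝ 2 μ) : ∫ x, |f x| * |g x| ∂μ ≤ ‖f‖ * ‖g‖ := by
  have h := real_inner_le_norm |f| |g|
  rwa [norm_abs_eq_norm, norm_abs_eq_norm, L2.inner_def,
    integral_congr_ae (inner_abs_abs_ae_eq f g)] at h

end MeasureTheory.Lp

section Energy

variable {Ω : Type*} [MeasurableSpace Ω] {μ : Measure Ω}

noncomputable def asymEnergy (a b : ℝ) (f : Lp ℝ 2 μ) : ℝ := ∫ x, asymSq a b (f x) ∂μ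

lemma integrable_sq_max_zero (f : Lp ℝ 2 μ) : Integrable (fun x => max (f x) 0 ^ 2) μ :=
  (Lp.memLp (Lp.posPart f)).integrable_sq.congr
    ((Lp.coeFn_posPart f).mono fun x hx => by simp only [hx])

lemma integrable_sq_max_neg_zero (f : Lp ℝ 2 μ) : Integrable (fun x => max (-f x) 0 ^ 2) μ :=
  (Lp.memLp (Lp.negPart f)).integrable_sq.congr
    ((Lp.coeFn_negPart_eq_max f).mono fun x hx => by simp only [hx])

lemma integrable_asymSq (a b : ℝ) (f : Lp ℝ 2 μ) :
    Integrable (fun x => asymSq a b (f x)) μ :=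
  ((integrable_sq_max_zero f).const_mul a).add ((integrable_sq_max_neg_zero f).const_mul b)

lemma asymEnergy_eq (a b : ℝ) (f : Lp ℝ 2 μ) :
    asymEnergy a b f = a * ‖Lp.posPart f‖ ^ 2 + b * ‖Lp.negPart f‖ ^ 2 := by
  have hpos : ‖Lp.posPart f‖ ^ 2 = ∫ x, max (f x) 0 ^ 2 ∂μ := by
    rw [Lp.norm_sq_eq_integral]
    exact integral_congr_ae ((Lp.coeFn_posPart f).mono fun x hx => by simp only [hx])
  have hneg : ‖Lp.negPart f‖ ^ 2 = ∫ x, max (-f x) 0 ^ 2 ∂μ := by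
    rw [Lp.norm_sq_eq_integral]
    exact integral_congr_ae ((Lp.coeFn_negPart_eq_max f).mono fun x hx => by simp only [hx])
  rw [hpos, hneg, ← integral_const_mul, ← integral_const_mul, ← integral_add
    ((integrable_sq_max_zero f).const_mul a) ((integrable_sq_max_neg_zero f).const_mul b)]
  rfl

lemma asymEnergy_midpoint {a b : ℝ} (hab : a ≤ b) (f h : Lp ℝ 2 μ) :
    a / 2 * ‖h‖ ^ 2
      ≤ asymEnergy a b f + asymEnergy a b (f + h) - 2 * asymEnergy a b (f + (2⁻¹ : ℝ) • h) := by
  have hint := integrable_asymSq (μ := μ) a b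
  calc a / 2 * ‖h‖ ^ 2 = ∫ x, a / 2 * h x ^ 2 ∂μ := by
        rw [Lp.norm_sq_eq_integral, integral_const_mul]
    _ ≤ ∫ x, (asymSq a b (f x) + asymSq a b ((f + h) x)
          - 2 * asymSq a b ((f + (2⁻¹ : ℝ) • h) x)) ∂μ := by
        refine integral_mono_ae ((Lp.memLp h).integrable_sq.const_mul _)
          (((hint f).add (hint _)).sub ((hint _).const_mul 2)) ?_
        filter_upwards [Lp.coeFn_add f h, Lp.coeFn_add f ((2⁻¹ : ℝ) • h),
          Lp.coeFn_smul (2⁻¹ : ℝ) h] with x h1 h2 h3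
        simp only [h1, h2, h3, Pi.add_apply, Pi.smul_apply, smul_eq_mul]
        exact asymSq_midpoint hab (f x) (h x)
    _ = _ := by
        rw [integral_sub, integral_add, integral_const_mul]
        exacts [rfl, hint f, hint _, (hint f).add (hint _), (hint _).const_mul 2]

lemma asymEnergy_mixed_le {a b : ℝ} (ha : 0 ≤ a) (hab : a ≤ b) (f g h : Lp ℝ 2 μ) :
    asymEnergy a b (f + g) + asymEnergy a b (f + h) - asymEnergy a b f
      - asymEnergy a b (f + g + h) ≤ 2 * b * (‖g‖ * ‖h‖) := by
  have hint := integrable_asymSq (μ := μ) a b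
  calc _ = ∫ x, (asymSq a b ((f + g) x) + asymSq a b ((f + h) x) - asymSq a b (f x)
          - asymSq a b ((f + g + h) x)) ∂μ := by
        rw [integral_sub, integral_sub, integral_add]
        exacts [rfl, hint _, hint _, (hint _).add (hint _), hint f,
          ((hint _).add (hint _)).sub (hint f), hint _]
    _ ≤ ∫ x, 2 * b * (|g x| * |h x|) ∂μ := by
        refine integral_mono_ae ((((hint _).add (hint _)).sub (hint f)).sub (hint _))
          ((Lp.integrable_abs_mul_abs g h).const_mul _) ?_
        filter_upwards [Lp.coeFn_add f g, Lp.coeFn_add f h, Lp.coeFn_add (f + g) h]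
          with x h1 h2 h3
        simp only [h1, h2, h3, Pi.add_apply]
        exact asymSq_mixed_le ha hab (f x) (g x) (h x)
    _ ≤ 2 * b * (‖g‖ * ‖h‖) := by
        rw [integral_const_mul]
        exact mul_le_mul_of_nonneg_left (Lp.integral_abs_mul_abs_le g h) (by linarith)

end Energy

section Functional

variable {Ω : Type*} [MeasurableSpace Ω] {μ : Measure Ω}
  {X : Type*} [NormedAddCommGroup X] [InnerProductSpace ℝ X] (T : X →ₗ[ℝ] Lp ℝ 2 μ)

lemma Jfun_eq_asymEnergy (a b : ℝ) (u : X) :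
    Jfun T a b u = (‖u‖ ^ 2 - asymEnergy a b (T u)) / 2 := by
  rw [Jfun, asymEnergy_eq, real_inner_self_eq_norm_sq]
  ring

lemma Jfun_midpoint_le {a b : ℝ} (hab : a ≤ b) (x w : X) :
    Jfun T a b x + Jfun T a b (x + w) - 2 * Jfun T a b (x + (2⁻¹ : ℝ) • w)
      ≤ (‖w‖ ^ 2 - a * ‖T w‖ ^ 2) / 4 := by
  have hE := asymEnergy_midpoint hab (T x) (T w)
  have hpar : ‖x‖ ^ 2 + ‖x + w‖ ^ 2 - 2 * ‖x + (2⁻¹ : ℝ) • w‖ ^ 2 = ‖w‖ ^ 2 / 2 := by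
    rw [norm_add_sq_real, norm_add_sq_real, inner_smul_right, norm_smul, mul_pow,
      Real.norm_of_nonneg (by norm_num)]
    ring
  simp only [Jfun_eq_asymEnergy, map_add, map_smul]
  linarith

lemma Jfun_mixed_le {a b : ℝ} (ha : 0 ≤ a) (hab : a ≤ b) (x w d : X) :
    Jfun T a b x + Jfun T a b (x + w + d) - Jfun T a b (x + w) - Jfun T a b (x + d)
      ≤ ⟪w, d⟫ + b * (‖T w‖ * ‖T d‖) := by
  have hE := asymEnergy_mixed_le ha hab (T x) (T w) (T d)
  have hpar : ‖x‖ ^ 2 + ‖x + w + d‖ ^ 2 - ‖x + w‖ ^ 2 - ‖x + d‖ ^ 2 = 2 * ⟪w, d⟫ := by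
    rw [add_assoc, norm_add_sq_real x (w + d), norm_add_sq_real x w, norm_add_sq_real x d,
      norm_add_sq_real w d, inner_add_right]
    ring
  simp only [Jfun_eq_asymEnergy, map_add]
  linarith

lemma mul_sq_norm_le_Jfun_sub_of_forall_add_le {S : Submodule ℝ X} {lk a b : ℝ} (hlk : 0 < lk)
    (ha : 0 ≤ a) (hab : a ≤ b) (hS : ∀ w ∈ S, ‖w‖ ^ 2 ≤ lk * ‖T w‖ ^ 2) {x : X}
    (hx : ∀ w ∈ S, Jfun T a b (x + w) ≤ Jfun T a b x) {w : X} (hw : w ∈ S) :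
    (a - lk) * ‖w‖ ^ 2 ≤ 4 * lk * (Jfun T a b x - Jfun T a b (x + w)) := by
  have hstep : Jfun T a b (x + w) - Jfun T a b x ≤ (‖w‖ ^ 2 - a * ‖T w‖ ^ 2) / 4 := by
    linarith [Jfun_midpoint_le T hab x w, hx _ (S.smul_mem (2⁻¹ : ℝ) hw)]
  linarith [mul_le_mul_of_nonneg_left hstep hlk.le, mul_le_mul_of_nonneg_left (hS w hw) ha]

theorem sq_norm_maximizer_sub_le {lk a b : ℝ} (hlk : 0 < lk) (hlka : lk < a) (hab : a ≤ b)
    {V₁ V₂ : Submodule ℝ X} (horth : V₁ ⟂ V₂) (hV₁ : ∀ u ∈ V₁, ‖u‖ ^ 2 ≤ lk * ‖T u‖ ^ 2)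
    (M : V₂ → V₁) (hM : ∀ (v : V₂) (u : V₁),
      Jfun T a b ((u : X) + (v : X)) ≤ Jfun T a b ((M v : X) + (v : X))) (v₁ v₂ : V₂) :
    (a - lk) * ‖(M v₂ : X) - M v₁‖ ^ 2
      ≤ 2 * lk * b * (‖T ((M v₂ : X) - M v₁)‖ * ‖T ((v₂ : X) - v₁)‖) := by
  have ha : 0 ≤ a := by linarith
  have hmax : ∀ v : V₂, ∀ w ∈ V₁, Jfun T a b ((M v : X) + v + w) ≤ Jfun T a b ((M v : X) + v) :=
    fun v w hw => by simpa only [add_right_comm, Submodule.coe_add] using hM v (M v + ⟨w, hw⟩)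
  set w : X := (M v₂ : X) - M v₁
  set d : X := (v₂ : X) - v₁
  have hw : w ∈ V₁ := V₁.sub_mem (M v₂).2 (M v₁).2
  have hwd : ⟪w, d⟫ = 0 := horth.inner_eq hw (V₂.sub_mem v₂.2 v₁.2)
  have hconc₁ := mul_sq_norm_le_Jfun_sub_of_forall_add_le T hlk ha hab hV₁ (hmax v₁) hw
  have hconc₂ :=
    mul_sq_norm_le_Jfun_sub_of_forall_add_le T hlk ha hab hV₁ (hmax v₂) (V₁.neg_mem hw)
  have hmixed := Jfun_mixed_le T ha hab ((M v₁ : X) + v₁) w d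
  have e₁ : (M v₁ : X) + v₁ + w + d = (M v₂ : X) + v₂ := by simp only [w, d]; abel
  have e₂ : (M v₂ : X) + v₂ + -w = (M v₁ : X) + v₁ + d := by simp only [w, d]; abel
  rw [e₁] at hmixed
  rw [e₂, norm_neg] at hconc₂
  rw [hwd] at hmixed
  linarith [mul_le_mul_of_nonneg_left hmixed (by positivity : (0 : ℝ) ≤ 4 * lk)]

end Functional

theorem stmt_5_general
    {n : ℕ}
    {Ωs : Set (EuclideanSpace ℝ (Fin n))}
    {X₀ : Type*} [NormedAddCommGroup X₀] [InnerProductSpace ℝ X₀]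
    (T : X₀ →ₗ[ℝ] Lp ℝ 2 (volume.restrict Ωs))
    {lk : ℝ} (hlk0 : 0 < lk)
    (V₁ V₂ : Submodule ℝ X₀) [FiniteDimensional ℝ V₁]
    (hV₂ : ∀ v : X₀, v ∈ V₂ ↔ ∀ u ∈ V₁, ⟪u, v⟫ = 0 ∧ ⟪T u, T v⟫ = 0)
    (hV₁b : ∀ u ∈ V₁, ⟪u, u⟫ ≤ lk * ‖T u‖ ^ 2)
    {α β : ℝ} (hA : lk < α) (hAB : α ≤ β)
    (M : V₂ → V₁)
    (hM : ∀ (v : V₂) (u : V₁),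
      Jfun T α β ((u : X₀) + (v : X₀)) ≤ Jfun T α β ((M v : X₀) + (v : X₀)))
    :
    ∃ C > 0, ∀ v₁ v₂ : V₂,
      ‖(M v₂ : X₀) - (M v₁ : X₀)‖ ≤ C * ‖T ((v₂ : X₀) - (v₁ : X₀))‖ := by
  have horth : V₁ ⟂ V₂ :=
    Submodule.isOrtho_iff_inner_eq.mpr fun u hu v hv => ((hV₂ v).mp hv u hu).1
  have hV₁ : ∀ u ∈ V₁, ‖u‖ ^ 2 ≤ lk * ‖T u‖ ^ 2 := fun u hu => by
    simpa only [real_inner_self_eq_norm_sq] using hV₁b u hu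
  obtain ⟨c, hc0, hc⟩ := (LinearMap.toContinuousLinearMap (T ∘ₗ V₁.subtype)).bound
  have hβ : 0 < β := by linarith
  have hgap : 0 < α - lk := sub_pos.mpr hA
  refine ⟨2 * lk * β * c / (α - lk), by positivity, fun v₁ v₂ => ?_⟩
  set w : X₀ := (M v₂ : X₀) - M v₁
  set D : ℝ := 2 * lk * β * c * ‖T ((v₂ : X₀) - v₁)‖
  have hTw : ‖T w‖ ≤ c * ‖w‖ := hc (M v₂ - M v₁)
  have hquad : (α - lk) * ‖w‖ * ‖w‖ ≤ D * ‖w‖ := by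
    have hmain := sq_norm_maximizer_sub_le T hlk0 hA hAB horth hV₁ M hM v₁ v₂
    have hTw' := mul_le_mul_of_nonneg_left hTw
      (by positivity : 0 ≤ 2 * lk * β * ‖T ((v₂ : X₀) - v₁)‖)
    linarith
  rw [div_mul_eq_mul_div, le_div_iff₀ hgap, mul_comm]
  rcases (norm_nonneg w).eq_or_lt with hw | hw
  · rw [← hw, mul_zero]; positivity
  · exact le_of_mul_le_mul_right hquad hw

theorem stmt_5
    {n : ℕ} {s : ℝ} (hs0 : 0 < s) (hs1 : s < 1) (hns : 2 * s < (n : ℝ))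
    {Ωs : Set (EuclideanSpace ℝ (Fin n))} (hΩb : Bornology.IsBounded Ωs)
    (hΩm : MeasurableSet Ωs)
    {K : EuclideanSpace ℝ (Fin n) → ℝ} (hKpos : ∀ x, x ≠ 0 → 0 < K x)
    (hK1 : Integrable (fun x => min (‖x‖ ^ 2) 1 * K x))
    (hK2 : ∃ lam > 0, ∀ x, x ≠ 0 → lam * ‖x‖ ^ (-((n : ℝ) + 2 * s)) ≤ K x)
    (hK3 : ∀ x, K (-x) = K x)
    {X₀ : Type*} [NormedAddCommGroup X₀] [InnerProductSpace ℝ X₀] [CompleteSpace X₀]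
    (T : X₀ →ₗ[ℝ] Lp ℝ 2 (volume.restrict Ωs)) (hT : Function.Injective T)
    {lk lk1 : ℝ} (hlk0 : 0 < lk) (hlk : lk < lk1)
    (V₁ V₂ : Submodule ℝ X₀) [FiniteDimensional ℝ V₁]
    (hV₂ : ∀ v : X₀, v ∈ V₂ ↔ ∀ u ∈ V₁, ⟪u, v⟫ = 0 ∧ ⟪T u, T v⟫ = 0)
    (hcompl : IsCompl V₁ V₂)
    (hV₁b : ∀ u ∈ V₁, ⟪u, u⟫ ≤ lk * ‖T u‖ ^ 2)
    (hV₂b : ∀ v ∈ V₂, lk1 * ‖T v‖ ^ 2 ≤ ⟪v, v⟫)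
    (lam1 : ℝ) (hlam1 : 0 < lam1)
    (hPoin : ∀ u : X₀, lam1 * ‖T u‖ ^ 2 ≤ ⟪u, u⟫)
    {α β : ℝ} (hA : lk < α) (hAB : α ≤ β)
    (M : V₂ → V₁)
    (hM : ∀ (v : V₂) (u : V₁),
      Jfun T α β ((u : X₀) + (v : X₀)) ≤ Jfun T α β ((M v : X₀) + (v : X₀)))
    :
    ∃ C > 0, ∀ v₁ v₂ : V₂,
      ‖(M v₂ : X₀) - (M v₁ : X₀)‖ ≤ C * ‖T ((v₂ : X₀) - (v₁ : X₀))‖ :=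
  stmt_5_general T hlk0 V₁ V₂ hV₂ hV₁b hA hAB M hM
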